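/- Let K = (G, M, W, I) be an incomplete context and L a closed, satisfiable set of implications on M. Define the L-completion K̄ as the formal context whose objects are the objects g ∈ G with intent L(g^□), together with one new object for each model B ∈ Mod(L) not already occurring as such an intent, with intent B. Then K ≤ K̄ in the information order and the implications valid in K̄ are exactly L. -/
import Mathlib


/-- The three possible values of an incomplete context:
`yes` (×), `no` (∘) and `unk` (?). -/
inductive IncVal : Type
  | yes : IncVal
  | no : IncVal
  | unk : IncVal
deriving DecidableEq

/-- The models of a set of attribute implications over `M`. -/
def ModSet {M : Type*} (L : Set (Set M × Set M)) : Set (Set M) :=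
  {T | ∀ p ∈ L, p.1 ⊆ T → p.2 ⊆ T}

/-- The closure operator induced by a set of implications `L`. -/
def implClosure {M : Type*} (L : Set (Set M × Set M)) (X : Set M) : Set M :=
  {m | ∀ T ∈ ModSet L, X ⊆ T → m ∈ T}

/-- Certain intent of an object. -/
def boxIntent {G M : Type*} (I : G → M → IncVal) (g : G) : Set M :=
  {m | I g m = IncVal.yes}

/-- The objects of the `L`-completion of an incomplete context: the original
objects together with one new object for each model of `L` that does not
already occur as an intent `L(g^□)`. -/
def ComplObj (G : Type*) {M : Type*} (I : G → M → IncVal)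
    (L : Set (Set M × Set M)) : Type _ :=
  G ⊕ {B : Set M // B ∈ ModSet L ∧ ∀ g : G, implClosure L (boxIntent I g) ≠ B}

/-- Object intents of the `L`-completion. -/
def complIntent {G M : Type*} (I : G → M → IncVal) (L : Set (Set M × Set M)) :
    ComplObj G I L → Set M :=
  Sum.elim (fun g => implClosure L (boxIntent I g)) (fun B => B.1)


lemma implClosure_mem_ModSet {M : Type*} (L : Set (Set M × Set M)) (X : Set M) :
    implClosure L X ∈ ModSet L := by
  intro p hp hsub m hm T hT hXT
  exact hT p hp (fun x hx => hsub hx T hT hXT) hm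

lemma subset_implClosure {M : Type*} (L : Set (Set M × Set M)) (X : Set M) :
    X ⊆ implClosure L X := fun m hm T _ hXT => hXT hm

/-- for a closed satisfiable set of implications `L` on an
incomplete context `K`, the `L`-completion `K̄` satisfies `K ≤ K̄` in the
information order, and the implications valid in `K̄` are exactly `L`. -/
theorem stmt10 {G M : Type*} [Fintype M] (I : G → M → IncVal)
    (L : Set (Set M × Set M))
    (hclosed : ∀ A B : Set M, (∀ T ∈ ModSet L, A ⊆ T → B ⊆ T) → (A, B) ∈ L)
    (hsat : ∀ p ∈ L, ∀ g : G,
      p.1 ⊆ {m | I g m = IncVal.yes} → p.2 ⊆ {m | I g m ≠ IncVal.no}) :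
    (∀ (g : G) (m : M),
      (I g m = IncVal.yes → m ∈ complIntent I L (Sum.inl g)) ∧
      (I g m = IncVal.no → m ∉ complIntent I L (Sum.inl g))) ∧
    (∀ A B : Set M,
      (∀ o : ComplObj G I L, A ⊆ complIntent I L o → B ⊆ complIntent I L o) ↔
        (A, B) ∈ L) := by
  constructor
  · intro g m
    constructor
    · intro hy
      exact subset_implClosure L _ hy
    · intro hn hm
      have hmem : (boxIntent I g, implClosure L (boxIntent I g)) ∈ L :=
        hclosed _ _ (fun T hT hsub x hx => hx T hT hsub)
      have := hsat _ hmem g (fun x hx => hx) hm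
      exact this hn
  · intro A B
    constructor
    · intro hval
      refine hclosed A B (fun T hT hAT => ?_)
      by_cases h : ∃ g : G, implClosure L (boxIntent I g) = T
      · obtain ⟨g, hg⟩ := h
        have := hval (Sum.inl g)
        simp only [complIntent, Sum.elim_inl, hg] at this
        exact this hAT
      · push_neg at h
        exact hval (Sum.inr ⟨T, hT, h⟩) hAT
    · intro hAB o hAo
      have hmod : complIntent I L o ∈ ModSet L := by
        cases o with
        | inl g => exact implClosure_mem_ModSet L _
        | inr B => exact B.2.1
      exact hmod _ hAB hAo
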